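/- arXiv:1201.1256 — 2 statements merged into one kernel-verified Lean document; each statement's English description precedes it below -/
import Mathlib

section
/- The discrete Wigner representation reproduces the Born rule: for all matrices ρ, E : Matrix (ZMod d) (ZMod d) ℂ, trace(ρ * E) = Σ over u ∈ ZMod d × ZMod d of ((1/d) * trace(A_u * ρ)) * trace(A_u * E). -/
open Matrix Complex

/-- ω = exp(2πi/d). -/
noncomputable def omegaC (d : ℕ) : ℂ := Complex.exp (2 * Real.pi * Complex.I / d)

/-- The clock matrix `Z`, with `Z x x = ω ^ x.val`. -/
noncomputable def Zmat (d : ℕ) : Matrix (ZMod d) (ZMod d) ℂ :=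
  Matrix.diagonal (fun x => omegaC d ^ x.val)

/-- The shift matrix `X`, with `X x y = 1` iff `x = y + 1`. -/
noncomputable def Xmat (d : ℕ) : Matrix (ZMod d) (ZMod d) ℂ :=
  Matrix.of fun x y => if x = y + 1 then 1 else 0

/-- The Heisenberg–Weyl operator `T_a`. -/
noncomputable def TW (d : ℕ) [NeZero d] (a : ZMod d × ZMod d) : Matrix (ZMod d) (ZMod d) ℂ :=
  omegaC d ^ ((-((2 : ZMod d)⁻¹ * a.1 * a.2)).val) • (Zmat d ^ a.1.val * Xmat d ^ a.2.val)

/-- The phase point operator at the origin, `A_0 = (1/d) • ∑ a, T_a`. -/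
noncomputable def Apoint0 (d : ℕ) [NeZero d] : Matrix (ZMod d) (ZMod d) ℂ :=
  (1 / (d : ℂ)) • ∑ a : ZMod d × ZMod d, TW d a

/-- The phase point operator `A_u = T_u * A_0 * T_uᴴ`. -/
noncomputable def Apoint (d : ℕ) [NeZero d] (u : ZMod d × ZMod d) : Matrix (ZMod d) (ZMod d) ℂ :=
  TW d u * Apoint0 d * (TW d u)ᴴ

/-! For odd `d`, entrywise `A_u x y = [x + y = 2 u₂] ω ^ (u₁ (x - y))`, so orthogonality of the
characters of `ZMod d` gives the completeness relation `∑ u, A_u x y * A_u z w = d [x = w] [y = z]`.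
Expanding `tr (A_u ρ) * tr (A_u E)` as a sum over matrix entries, the completeness relation
collapses `∑ u, tr (A_u ρ) * tr (A_u E)` to `d * tr (ρ E)`. -/

theorem sum_trace_mul_mul_trace_mul {ι n R : Type*} [Fintype ι] [Fintype n] [DecidableEq n]
    [CommSemiring R] (A : ι → Matrix n n R) (c : R)
    (hA : ∀ x y z w, ∑ i, A i x y * A i z w = if x = w ∧ y = z then c else 0)
    (ρ E : Matrix n n R) :
    ∑ i, (A i * ρ).trace * (A i * E).trace = c * (ρ * E).trace :=
  calc ∑ i, (A i * ρ).trace * (A i * E).trace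
      = ∑ i, ∑ x, ∑ z, ∑ y, ∑ w, A i x y * ρ y x * (A i z w * E w z) := by
        simp only [trace, diag, mul_apply, Finset.sum_mul_sum]
    _ = ∑ x, ∑ z, ∑ y, ∑ w, (∑ i, A i x y * A i z w) * (ρ y x * E w z) := by
        simp_rw [mul_mul_mul_comm (A _ _ _) (ρ _ _), Finset.sum_comm (γ := ι), Finset.sum_mul]
    _ = ∑ x, ∑ z, c * (ρ z x * E x z) := by
        simp only [hA, ite_and, ite_mul, zero_mul, Finset.sum_ite_eq, Finset.sum_ite_eq',
          Finset.mem_univ, if_true]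
    _ = c * (ρ * E).trace := by
        simp only [trace, diag, mul_apply, Finset.mul_sum]
        exact Finset.sum_comm

section

variable {d : ℕ} [NeZero d]

local notation "𝕖" => ZMod.stdAddChar

theorem omegaC_pow_val (a : ZMod d) : omegaC d ^ a.val = 𝕖 a := by
  rw [ZMod.stdAddChar_apply, ZMod.toCircle_apply, omegaC, ← Complex.exp_nat_mul]
  ring_nf

theorem Xmat_pow_apply (k : ℕ) (x y : ZMod d) :
    (Xmat d ^ k) x y = if x = y + k then 1 else 0 := by
  induction k generalizing y with
  | zero => simp [Matrix.one_apply]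
  | succ k ih =>
    have hX (z : ZMod d) : Xmat d z y = if z = y + 1 then 1 else 0 := rfl
    rw [pow_succ, Matrix.mul_apply, Finset.sum_eq_single (y + 1)]
    · simp [ih, hX, add_assoc, add_comm (1 : ZMod d)]
    · intro z _ hz
      simp [hX, hz]
    · simp

theorem TW_apply (a : ZMod d × ZMod d) (x y : ZMod d) :
    TW d a x y = if x = y + a.2 then 𝕖 (a.1 * x - 2⁻¹ * a.1 * a.2) else 0 := by
  have hZ : Zmat d ^ a.1.val = diagonal fun x => 𝕖 (a.1 * x) := by
    rw [Zmat, diagonal_pow]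
    congr 1
    ext x
    rw [Pi.pow_apply, omegaC_pow_val, ← AddChar.map_nsmul_eq_pow, nsmul_eq_mul,
      ZMod.natCast_zmod_val]
  rw [TW, Matrix.smul_apply, hZ, diagonal_mul, Xmat_pow_apply, ZMod.natCast_zmod_val,
    omegaC_pow_val, smul_eq_mul, mul_ite, mul_one, mul_zero, mul_ite, mul_zero,
    ← AddChar.map_add_eq_mul, neg_add_eq_sub]

theorem sum_stdAddChar_mul (b : ZMod d) :
    ∑ a : ZMod d, 𝕖 (a * b) = if b = 0 then (d : ℂ) else 0 := by
  rw [AddChar.sum_mulShift b (ZMod.isPrimitive_stdAddChar d), ZMod.card]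
  push_cast
  rfl

variable (h2 : IsUnit (2 : ZMod d))
include h2

theorem Apoint0_apply (x y : ZMod d) : Apoint0 d x y = if x + y = 0 then 1 else 0 := by
  have h2inv : (2 : ZMod d)⁻¹ * 2 = 1 := ZMod.inv_mul_of_unit _ h2
  have hrow (a₁ : ZMod d) : ∑ a₂, TW d (a₁, a₂) x y = 𝕖 (a₁ * (2⁻¹ * (x + y))) := by
    simp only [TW_apply, ← sub_eq_iff_eq_add', Finset.sum_ite_eq, Finset.mem_univ, if_true]
    congr 1
    linear_combination -a₁ * x * h2inv
  have hhalf : (2 : ZMod d)⁻¹ * (x + y) = 0 ↔ x + y = 0 :=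
    (IsUnit.of_mul_eq_one _ h2inv).mul_right_eq_zero
  rw [Apoint0, Matrix.smul_apply, Matrix.sum_apply, Fintype.sum_prod_type]
  simp_rw [hrow, sum_stdAddChar_mul, hhalf]
  split_ifs <;> simp

theorem mul_Apoint0_apply (M : Matrix (ZMod d) (ZMod d) ℂ) (x z : ZMod d) :
    (M * Apoint0 d) x z = M x (-z) := by
  simp_rw [Matrix.mul_apply, Apoint0_apply h2, ← eq_neg_iff_add_eq_zero, mul_ite, mul_one,
    mul_zero, Finset.sum_ite_eq', Finset.mem_univ, if_true]

theorem Apoint_apply (u : ZMod d × ZMod d) (x y : ZMod d) :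
    Apoint d u x y = if x + y = 2 * u.2 then 𝕖 (u.1 * (x - y)) else 0 := by
  rw [Apoint, Matrix.mul_apply, Finset.sum_eq_single (y - u.2)]
  · have hstar (a : ZMod d) : star (𝕖 a) = 𝕖 (-a) := (AddChar.map_neg_eq_conj _ a).symm
    have hcond : x = -(y - u.2) + u.2 ↔ x + y = 2 * u.2 := by
      constructor <;> intro h <;> linear_combination h
    rw [mul_Apoint0_apply h2, conjTranspose_apply, TW_apply, TW_apply,
      if_pos (by ring : y = y - u.2 + u.2), ite_mul, zero_mul, hstar, ← AddChar.map_add_eq_mul]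
    exact if_congr hcond (by ring_nf) rfl
  · intro z _ hz
    rw [conjTranspose_apply, TW_apply, if_neg (fun h => hz (by rw [h]; ring)), star_zero, mul_zero]
  · simp

theorem sum_Apoint_mul_Apoint (x y z w : ZMod d) :
    ∑ u, Apoint d u x y * Apoint d u z w = if x = w ∧ y = z then (d : ℂ) else 0 := by
  have h2inv : (2 : ZMod d)⁻¹ * 2 = 1 := ZMod.inv_mul_of_unit _ h2
  have hhalf (s t : ZMod d) : s = 2 * t ↔ t = 2⁻¹ * s := by
    constructor <;> intro h
    · linear_combination -2⁻¹ * h - t * h2inv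
    · linear_combination -2 * h - s * h2inv
  have hcond : z + w = 2 * (2⁻¹ * (x + y)) ∧ x - y + (z - w) = 0 ↔ x = w ∧ y = z := by
    rw [← mul_assoc, ZMod.mul_inv_of_unit _ h2, one_mul]
    constructor
    · rintro ⟨hsum, hdiff⟩
      have hxw : x = w := h2.mul_left_cancel (by linear_combination hdiff - hsum)
      exact ⟨hxw, by linear_combination -hsum - hxw⟩
    · rintro ⟨rfl, rfl⟩
      constructor <;> ring
  simp_rw [Apoint_apply h2, ite_zero_mul_ite_zero, ← AddChar.map_add_eq_mul, ← mul_add]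
  rw [Fintype.sum_prod_type, Finset.sum_comm]
  simp_rw [Finset.sum_ite_irrel, sum_stdAddChar_mul, Finset.sum_const_zero, ite_and, hhalf (x + y), Finset.sum_ite_eq',
    Finset.mem_univ, if_true, ← ite_and]
  exact if_congr hcond rfl rfl

end

theorem wigner_born_rule_general (d : ℕ) [NeZero d] (hodd : Odd d)
    (ρ E : Matrix (ZMod d) (ZMod d) ℂ) :
    (ρ * E).trace =
      ∑ u : ZMod d × ZMod d,
        ((1 / (d : ℂ)) * (Apoint d u * ρ).trace) * (Apoint d u * E).trace := by
  have h2 : IsUnit (2 : ZMod d) := by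
    simpa using (ZMod.isUnit_iff_coprime 2 d).mpr (Nat.coprime_two_left.mpr hodd)
  simp_rw [mul_assoc, ← Finset.mul_sum,
    sum_trace_mul_mul_trace_mul (Apoint d) d (sum_Apoint_mul_Apoint h2)]
  rw [one_div, inv_mul_cancel_left₀ (Nat.cast_ne_zero.mpr (NeZero.ne d))]

/-- The discrete Wigner representation reproduces the Born rule. -/
theorem wigner_born_rule (d : ℕ) [NeZero d] (hodd : Odd d) (hd : 1 < d)
    (ρ E : Matrix (ZMod d) (ZMod d) ℂ) :
    (ρ * E).trace =
      ∑ u : ZMod d × ZMod d,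
        ((1 / (d : ℂ)) * (Apoint d u * ρ).trace) * (Apoint d u * E).trace :=
  wigner_born_rule_general d hodd ρ E
end

section
/- The discrete Wigner function is normalized: for every matrix ρ : Matrix (ZMod d) (ZMod d) ℂ, Σ over u ∈ ZMod d × ZMod d of (1/d) * trace(A_u * ρ) = trace(ρ). -/
open Matrix Complex

/-! The Weyl operators form a unitary 1-design. Conjugation by `T_a` moves the entry
`M (x - a₂) (y - a₂)` to position `(x, y)` and multiplies it by the character value
`ω ^ (a₁ (x - y))` (the phase of `T_a` has modulus one and cancels), so summing over `a₁` kills the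
off-diagonal entries and summing over `a₂` collects the trace: `∑ a, T_a M T_aᴴ = d tr(M) • 1`.
Applied to `M = A_0` this gives `∑ u, A_u = d • 1`, since `tr A_0 = 1`: among the `T_a` only
`T_0 = 1` has nonzero trace. -/

lemma Matrix.permMatrix_mul_mul_conjTranspose {n R : Type*} [DecidableEq n] [Fintype n]
    [NonAssocSemiring R] [StarRing R] (σ : Equiv.Perm n) (M : Matrix n n R) :
    σ.permMatrix R * M * (σ.permMatrix R)ᴴ = M.submatrix σ σ := by
  rw [conjTranspose_permMatrix, PEquiv.toMatrix_toPEquiv_mul, PEquiv.mul_toMatrix_toPEquiv]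
  rfl

section HeisenbergWeyl

open ZMod

variable {d : ℕ} [NeZero d]

lemma omegaC_pow_eq_stdAddChar (n : ℕ) : omegaC d ^ n = stdAddChar (n : ZMod d) := by
  have h := stdAddChar_coe (N := d) n
  push_cast at h
  rw [h, omegaC, ← Complex.exp_nat_mul]
  ring_nf

lemma omegaC_pow_val_eq_stdAddChar (x : ZMod d) : omegaC d ^ x.val = stdAddChar x := by
  rw [omegaC_pow_eq_stdAddChar, natCast_zmod_val]

lemma Zmat_pow_val (a : ZMod d) :
    Zmat d ^ a.val = diagonal fun x => stdAddChar (x * a) := by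
  rw [Zmat, diagonal_pow]
  congr 1
  ext x
  simp [omegaC_pow_val_eq_stdAddChar, ← AddChar.map_nsmul_eq_pow, mul_comm x]

lemma Xmat_pow_eq_permMatrix (n : ℕ) :
    Xmat d ^ n = Equiv.Perm.permMatrix ℂ (Equiv.subRight (n : ZMod d)) := by
  induction n with
  | zero =>
    ext x y
    simp [one_apply]
  | succ n ih =>
    rw [pow_succ, ih, PEquiv.toMatrix_toPEquiv_mul]
    ext x y
    simp [Xmat, sub_eq_iff_eq_add, add_assoc, add_comm (1 : ZMod d)]

lemma TW_eq_smul (a : ZMod d × ZMod d) :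
    TW d a = stdAddChar (-(2⁻¹ * a.1 * a.2)) •
      (diagonal (fun x => stdAddChar (x * a.1)) *
        Equiv.Perm.permMatrix ℂ (Equiv.subRight a.2)) := by
  rw [TW, omegaC_pow_val_eq_stdAddChar, Zmat_pow_val, Xmat_pow_eq_permMatrix, natCast_zmod_val]

lemma TW_mul_mul_conjTranspose_apply (a : ZMod d × ZMod d) (M : Matrix (ZMod d) (ZMod d) ℂ)
    (x y : ZMod d) :
    (TW d a * M * (TW d a)ᴴ) x y = stdAddChar (a.1 * (x - y)) * M (x - a.2) (y - a.2) := by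
  set c : ℂ := stdAddChar (-(2⁻¹ * a.1 * a.2))
  set v : ZMod d → ℂ := fun x => stdAddChar (x * a.1)
  set P := Equiv.Perm.permMatrix ℂ (Equiv.subRight a.2)
  have hc : c * star c = 1 := by
    rw [← starRingEnd_apply, ← AddChar.map_neg_eq_conj, ← AddChar.map_add_eq_mul,
      add_neg_cancel, AddChar.map_zero_eq_one]
  have hconj : TW d a * M * (TW d a)ᴴ = diagonal v * (P * M * Pᴴ) * (diagonal v)ᴴ := by
    rw [TW_eq_smul, conjTranspose_smul, Matrix.smul_mul, Matrix.smul_mul, Matrix.mul_smul,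
      smul_smul, hc, one_smul, conjTranspose_mul]
    simp only [v, P, Matrix.mul_assoc]
  rw [hconj, Matrix.permMatrix_mul_mul_conjTranspose, diagonal_conjTranspose, mul_diagonal,
    diagonal_mul]
  simp only [v, submatrix_apply, Equiv.subRight_apply, Pi.star_apply, ← starRingEnd_apply,
    ← AddChar.map_neg_eq_conj]
  rw [mul_right_comm, ← AddChar.map_add_eq_mul]
  congr 2
  ring

lemma sum_TW_mul_mul_conjTranspose (M : Matrix (ZMod d) (ZMod d) ℂ) :
    ∑ a, TW d a * M * (TW d a)ᴴ = ((d : ℂ) * M.trace) • 1 := by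
  ext x y
  rw [Matrix.sum_apply, Fintype.sum_prod_type]
  simp_rw [TW_mul_mul_conjTranspose_apply]
  rw [← Finset.sum_mul_sum, AddChar.sum_mulShift _ (isPrimitive_stdAddChar d),
    Matrix.smul_apply, one_apply, ZMod.card]
  simp only [sub_eq_zero]
  split_ifs with hxy
  · subst hxy
    rw [smul_eq_mul, mul_one]
    congr 1
    exact Fintype.sum_equiv (Equiv.subLeft x) _ _ fun _ => rfl
  · simp

lemma trace_TW (a : ZMod d × ZMod d) : (TW d a).trace = if a = 0 then (d : ℂ) else 0 := by
  obtain ⟨a₁, a₂⟩ := a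
  rw [TW_eq_smul, trace_smul]
  simp only [trace, diag, diagonal_mul]
  by_cases h₂ : a₂ = 0
  · subst h₂
    simp [AddChar.sum_mulShift _ (isPrimitive_stdAddChar d)]
  · simp [h₂]

lemma trace_Apoint0 : (Apoint0 d).trace = 1 := by
  rw [Apoint0, trace_smul, trace_sum]
  simp_rw [trace_TW]
  rw [Finset.sum_ite_eq']
  simp

lemma sum_Apoint : ∑ u, Apoint d u = (d : ℂ) • 1 := by
  simp only [Apoint]
  rw [sum_TW_mul_mul_conjTranspose, trace_Apoint0, mul_one]

end HeisenbergWeyl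

theorem wigner_normalized_general (d : ℕ) [NeZero d]
    (ρ : Matrix (ZMod d) (ZMod d) ℂ) :
    ∑ u : ZMod d × ZMod d, (1 / (d : ℂ)) * (Apoint d u * ρ).trace = ρ.trace := by
  rw [← Finset.mul_sum, ← trace_sum, ← Finset.sum_mul, sum_Apoint, smul_mul, one_mul,
    trace_smul, smul_eq_mul, one_div, inv_mul_cancel_left₀ (NeZero.ne (d : ℂ))]

/-- The discrete Wigner function is normalized. -/
theorem wigner_normalized (d : ℕ) [NeZero d] (hodd : Odd d) (hd : 1 < d)
    (ρ : Matrix (ZMod d) (ZMod d) ℂ) :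
    ∑ u : ZMod d × ZMod d, (1 / (d : ℂ)) * (Apoint d u * ρ).trace = ρ.trace :=
  wigner_normalized_general d ρ
end
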